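/- arXiv:2112.10072 — 5 statements merged into one kernel-verified Lean document; each statement's English description precedes it below -/
import Mathlib

section
/- In a category B with finite limits, a morphism p : x ⟶ y is an almost descent morphism (i.e., the Eilenberg–Moore comparison functor K^p is faithful) if and only if p is a pullback-stable epimorphism (every pullback of p along any morphism is an epimorphism). -/
/-!
The comparison functor of `p_! ⊣ p^*` is faithful exactly when `p^*` is, and a right adjoint is
faithful exactly when its counit is pointwise epi. The counit of `p_! ⊣ p^*` at `g : W ⟶ y` is
the projection `W ×_y x ⟶ W`, viewed over `y`; it is epi in `B↓y` iff it is epi in `B`, because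
the forgetful functor `B↓y ⥤ B` is faithful and, having the right adjoint `W ↦ W ⨯ y`,
preserves epimorphisms.
-/

open CategoryTheory CategoryTheory.Limits

/-- A morphism `p` is a pullback-stable epimorphism if in every pullback square over `p`,
the side opposite to `p` is an epimorphism. -/
def IsPullbackStableEpi {B : Type*} [Category B] {x y : B} (p : x ⟶ y) : Prop :=
  ∀ {P W : B} (fst : P ⟶ x) (snd : P ⟶ W) (g : W ⟶ y),
    IsPullback fst snd p g → Epi snd

namespace CategoryTheory

theorem Monad.comparison_faithful_iff {C D : Type*} [Category C] [Category D]
    {L : C ⥤ D} {R : D ⥤ C} (h : L ⊣ R) : (Monad.comparison h).Faithful ↔ R.Faithful :=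
  ⟨fun _ ↦ .of_iso (Monad.comparisonForget h), fun _ ↦ inferInstance⟩

variable {C : Type*} [Category C]

theorem Over.epi_left_of_epi_of_hasBinaryProducts [HasBinaryProducts C] {X : C} {f g : Over X}
    (k : f ⟶ g) [Epi k] : Epi k.left :=
  (Over.forget X).map_epi k

variable [HasPullbacks C] {x y : C} (p : x ⟶ y)

theorem Over.pullback_faithful_iff [HasBinaryProducts C] :
    (Over.pullback p).Faithful ↔ ∀ {W : C} (g : W ⟶ y), Epi (pullback.fst g p) := by
  refine ⟨fun _ {W} g ↦ ?_, fun _ ↦ Over.faithful_pullback p⟩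
  simpa using
    Over.epi_left_of_epi_of_hasBinaryProducts ((Over.mapPullbackAdj p).counit.app (Over.mk g))

end CategoryTheory

theorem isPullbackStableEpi_iff_epi_pullback_fst {C : Type*} [Category C] [HasPullbacks C]
    {x y : C} (p : x ⟶ y) :
    IsPullbackStableEpi p ↔ ∀ {W : C} (g : W ⟶ y), Epi (pullback.fst g p) := by
  refine ⟨fun h W g ↦ h _ _ g (IsPullback.of_hasPullback g p).flip, fun h P W fst snd g sq ↦ ?_⟩
  rw [← sq.flip.isoPullback_hom_fst]
  exact epi_comp _ _

/-- In a category with finite limits, `p` is an almost descent morphism (the Eilenberg–Moore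
comparison functor of the adjunction `p_! ⊣ p^*` is faithful) iff `p` is a pullback-stable
epimorphism. -/
theorem almost_descent_iff_pullback_stable_epi
    {B : Type*} [Category B] [HasFiniteLimits B] {x y : B} (p : x ⟶ y) :
    (Monad.comparison (Over.mapPullbackAdj p)).Faithful ↔ IsPullbackStableEpi p := by
  rw [Monad.comparison_faithful_iff, Over.pullback_faithful_iff,
    isPullbackStableEpi_iff_epi_pullback_fst]
end

section
/- In a category B with finite limits, a morphism p : x ⟶ y is a descent morphism (i.e., the Eilenberg–Moore comparison functor K^p is fully faithful) if and only if p is a pullback-stable regular epimorphism (every pullback of p along any morphism is a regular epimorphism). -/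
/-!
The counit of `p_! ⊣ p^*` at `A ⟶ y` is the projection `A ×_y x ⟶ A`, and the Beck pair of
this counit component is its kernel pair. For any adjunction, the comparison functor is fully
faithful exactly when every counit component is the coequalizer of its Beck pair. The forgetful
functor `B/y ⥤ B` reflects coequalizers, and preserves them because it has the right adjoint
`Z ↦ (y ⨯ Z ⟶ y)`. So for `p_! ⊣ p^*` full faithfulness says that
every pullback `A ×_y x ⟶ A` of `p` is the coequalizer of its kernel pair, i.e. a regular
epimorphism.
-/

open CategoryTheory CategoryTheory.Limits

/-- A morphism `p` is a pullback-stable regular epimorphism if in every pullback square over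
`p`, the side opposite to `p` is a regular epimorphism. -/
def IsPullbackStableRegularEpi {B : Type*} [Category B] {x y : B} (p : x ⟶ y) : Prop :=
  ∀ {P W : B} (fst : P ⟶ x) (snd : P ⟶ W) (g : W ⟶ y),
    IsPullback fst snd p g → Nonempty (RegularEpi snd)

open Monad.MonadicityInternal

namespace CategoryTheory.Adjunction

variable {C D : Type*} [Category C] [Category D] {L : C ⥤ D} {R : D ⥤ C} (adj : L ⊣ R)

/-- A fully faithful functor reflects colimits, and the comparison functor sends the counit
cofork to the Beck coequalizer of the free algebra. -/
noncomputable def isColimitCounitCoforkOfComparisonFullyFaithful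
    [(Monad.comparison adj).Full] [(Monad.comparison adj).Faithful] (A : D) :
    IsColimit (counitCofork adj A) :=
  isColimitOfIsColimitCoforkMap (Monad.comparison adj) _ (Monad.beckAlgebraCoequalizer _)

theorem comparison_full_of_isColimit_counitCofork (h : ∀ A, IsColimit (counitCofork adj A)) :
    (Monad.comparison adj).Full where
  map_surjective {A A'} φ := by
    obtain ⟨f, hf⟩ := φ
    change R.obj A ⟶ R.obj A' at f
    change R.map (L.map f) ≫ R.map (adj.counit.app A') = R.map (adj.counit.app A) ≫ f at hf
    have hk : L.map (R.map (adj.counit.app A)) ≫ L.map f ≫ adj.counit.app A' =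
        adj.counit.app (L.obj (R.obj A)) ≫ L.map f ≫ adj.counit.app A' := by
      rw [← L.map_comp_assoc, ← hf, L.map_comp, Category.assoc]
      simp
    obtain ⟨d, hd⟩ : ∃ d : A ⟶ A', adj.counit.app A ≫ d = (adj.homEquiv _ _).symm f :=
      ⟨(h A).desc (Cofork.ofπ _ hk), (h A).fac (Cofork.ofπ _ hk) WalkingParallelPair.one⟩
    refine ⟨d, Monad.Algebra.Hom.ext ?_⟩
    change R.map d = f
    have hRd : adj.homEquiv _ _ (adj.counit.app A ≫ d) = R.map d := by
      simp [Adjunction.homEquiv_unit]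
    rwa [hd, Equiv.apply_symm_apply, eq_comm] at hRd

end CategoryTheory.Adjunction

namespace CategoryTheory.Over

variable {B : Type*} [Category B] [HasPullbacks B] {x y : B} (p : x ⟶ y)

theorem mapPullbackAdj_counit_app_left (A : Over y) :
    ((mapPullbackAdj p).counit.app A).left = pullback.fst A.hom p := by
  simp

theorem isKernelPair_mapPullbackAdj_counit_app (A : Over y) :
    IsKernelPair ((mapPullbackAdj p).counit.app A).left
      ((map p).map ((Over.pullback p).map ((mapPullbackAdj p).counit.app A))).left
      ((mapPullbackAdj p).counit.app ((map p).obj ((Over.pullback p).obj A))).left := by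
  simp only [mapPullbackAdj_counit_app, Functor.comp_obj, Functor.id_obj]
  refine (IsPullback.of_bot ?_ (pullback.lift_fst _ _ _).symm
    (IsPullback.of_hasPullback A.hom p)).flip
  rw [Over.w, pullback.lift_snd]
  exact IsPullback.of_hasPullback ((map p).obj ((Over.pullback p).obj A)).hom p

theorem nonempty_isColimit_counitCofork_mapPullbackAdj_iff [HasBinaryProducts B] (A : Over y) :
    Nonempty (IsColimit (counitCofork (mapPullbackAdj p) A)) ↔
      Nonempty (RegularEpi (pullback.fst A.hom p)) := by
  rw [← mapPullbackAdj_counit_app_left]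
  constructor
  · rintro ⟨hc⟩
    exact ⟨Cofork.IsColimit.regularEpi (isColimitCoforkMapOfIsColimit (forget y) _ hc)⟩
  · rintro ⟨hr⟩
    exact ⟨isColimitOfIsColimitCoforkMap (forget y) _
      ((isKernelPair_mapPullbackAdj_counit_app p A).toCoequalizer hr)⟩

end CategoryTheory.Over

theorem isPullbackStableRegularEpi_iff {B : Type*} [Category B] [HasPullbacks B] {x y : B}
    (p : x ⟶ y) :
    IsPullbackStableRegularEpi p ↔
      ∀ {W : B} (g : W ⟶ y), Nonempty (RegularEpi (pullback.fst g p)) := by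
  refine ⟨fun h W g => h _ _ g (IsPullback.of_hasPullback g p).flip, ?_⟩
  rintro h P W fst snd g hpb
  obtain ⟨r⟩ := h g
  exact ⟨RegularEpi.ofArrowIso (Arrow.isoMk
    ((IsPullback.of_hasPullback g p).flip.isoIsPullback _ _ hpb) (Iso.refl W)) r⟩

/-- In a category with finite limits, `p` is a descent morphism (the Eilenberg–Moore
comparison functor of the adjunction `p_! ⊣ p^*` is fully faithful) iff `p` is a
pullback-stable regular epimorphism. -/
theorem descent_iff_pullback_stable_regularEpi
    {B : Type*} [Category B] [HasFiniteLimits B] {x y : B} (p : x ⟶ y) :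
    ((Monad.comparison (Over.mapPullbackAdj p)).Full ∧
      (Monad.comparison (Over.mapPullbackAdj p)).Faithful) ↔
    IsPullbackStableRegularEpi p := by
  rw [isPullbackStableRegularEpi_iff]
  constructor
  · rintro ⟨_, _⟩ W g
    exact (Over.nonempty_isColimit_counitCofork_mapPullbackAdj_iff p (Over.mk g)).1
      ⟨(Over.mapPullbackAdj p).isColimitCounitCoforkOfComparisonFullyFaithful _⟩
  · intro h
    have hc A := ((Over.nonempty_isColimit_counitCofork_mapPullbackAdj_iff p A).2 (h A.hom)).some
    have (A : Over y) : Epi ((Over.mapPullbackAdj p).counit.app A) := Cofork.IsColimit.epi (hc A)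
    have := (Over.mapPullbackAdj p).faithful_R_of_epi_counit_app
    exact ⟨(Over.mapPullbackAdj p).comparison_full_of_isColimit_counitCofork hc, inferInstance⟩
end

section
/- Let B be a category with finite limits and p : x ⟶ y a morphism. The Eilenberg–Moore comparison functor K^p : B↓y → Desc(p) is fully faithful if and only if every counit component ε_f : p_!(p^* f) ⟶ f of the adjunction p_! ⊣ p^* is a regular epimorphism in the slice category B↓y. -/
open CategoryTheory CategoryTheory.Limits

/-!
The comparison functor `K` satisfies `K ⋙ forget = R`, so it is faithful iff `R` is, i.e. iff every
counit component is epi. Under the adjunction, a map `h : R A ⟶ R Z` is a morphism of algebras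
`K A ⟶ K Z` exactly when its transpose `L R A ⟶ Z` coequalizes the canonical pair
`L R ε_A, ε_{L R A}`. Hence `K` is fully faithful iff each `ε_A` is the coequalizer of this pair, and
a counit all of whose components are regular epis has this property.
-/

namespace CategoryTheory.Adjunction

variable {C D : Type*} [Category C] [Category D] {L : C ⥤ D} {R : D ⥤ C} (adj : L ⊣ R)

theorem comparison_faithful_iff_epi_counit :
    (Monad.comparison adj).Faithful ↔ ∀ A, Epi (adj.counit.app A) := by
  constructor
  · intro _
    have : R.Faithful := ⟨fun w => (Monad.comparison adj).map_injective (Monad.Algebra.Hom.ext w)⟩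
    exact fun A => inferInstance
  · intro _
    have := adj.faithful_R_of_epi_counit_app
    infer_instance

theorem counit_comp_eq_homEquiv_symm {A Z : D} (g : A ⟶ Z) :
    adj.counit.app A ≫ g = (adj.homEquiv _ _).symm (R.map g) := by
  simp [homEquiv_counit]

theorem algebraHom_condition_iff_coequalizes {A Z : D} (h : R.obj A ⟶ R.obj Z) :
    R.map (L.map h) ≫ R.map (adj.counit.app Z) = R.map (adj.counit.app A) ≫ h ↔
      L.map (R.map (adj.counit.app A)) ≫ (adj.homEquiv _ _).symm h =
        adj.counit.app (L.obj (R.obj A)) ≫ (adj.homEquiv _ _).symm h := by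
  rw [← homEquiv_naturality_left_symm, counit_comp_eq_homEquiv_symm]
  refine Iff.trans ?_ (adj.homEquiv _ _).symm.injective.eq_iff.symm
  rw [homEquiv_counit, R.map_comp, eq_comm]

def comparisonHomOfCofork {A : D}
    (s : Cofork (L.map (R.map (adj.counit.app A))) (adj.counit.app (L.obj (R.obj A)))) :
    (Monad.comparison adj).obj A ⟶ (Monad.comparison adj).obj s.pt where
  f := adj.homEquiv _ _ s.π
  h := (adj.algebraHom_condition_iff_coequalizes (A := A) (adj.homEquiv _ _ s.π)).mpr
    (by simpa only [Functor.id_obj, Equiv.symm_apply_apply] using s.condition)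

noncomputable def isColimitCounitCoforkOfFullOfFaithful [(Monad.comparison adj).Full]
    [hK : (Monad.comparison adj).Faithful] (A : D) :
    IsColimit (Cofork.ofπ (adj.counit.app A) (adj.counit_naturality _)) :=
  Cofork.IsColimit.mk' _ fun s =>
    have : Epi (adj.counit.app A) := (adj.comparison_faithful_iff_epi_counit.mp hK) A
    have fac : adj.counit.app A ≫ (Monad.comparison adj).preimage (adj.comparisonHomOfCofork s)
        = s.π := by
      have hR : R.map ((Monad.comparison adj).preimage (adj.comparisonHomOfCofork s))
          = adj.homEquiv _ _ s.π :=
        congrArg Monad.Algebra.Hom.f ((Monad.comparison adj).map_preimage _)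
      rw [counit_comp_eq_homEquiv_symm, hR, Equiv.symm_apply_apply]
    ⟨_, fac, fun hm => by rw [← cancel_epi (adj.counit.app A)]; exact hm.trans fac.symm⟩

theorem comparison_full_of_isColimit_counitCofork_s3
    (hc : ∀ A, IsColimit (Cofork.ofπ (adj.counit.app A) (adj.counit_naturality _))) :
    (Monad.comparison adj).Full where
  map_surjective {A B} φ := by
    obtain ⟨g, hg⟩ := Cofork.IsColimit.desc' (hc A) ((adj.homEquiv _ _).symm φ.f)
      ((adj.algebraHom_condition_iff_coequalizes φ.f).mp φ.h)
    refine ⟨g, Monad.Algebra.Hom.ext ((adj.homEquiv _ _).symm.injective ?_)⟩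
    exact (adj.counit_comp_eq_homEquiv_symm g).symm.trans hg

theorem comparison_full_faithful_iff_regularEpi_counit :
    ((Monad.comparison adj).Full ∧ (Monad.comparison adj).Faithful) ↔
      ∀ A, Nonempty (RegularEpi (adj.counit.app A)) := by
  constructor
  · rintro ⟨_, _⟩ A
    exact ⟨Cofork.IsColimit.regularEpi (adj.isColimitCounitCoforkOfFullOfFaithful A)⟩
  · intro h
    have hre : ∀ A, RegularEpi (adj.counit.app A) := fun A => (h A).some
    exact ⟨adj.comparison_full_of_isColimit_counitCofork_s3 (LiftLeftAdjoint.counitCoequalises adj hre),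
      adj.comparison_faithful_iff_epi_counit.mpr fun A => (hre A).epi⟩

end CategoryTheory.Adjunction

/-- For `p : x ⟶ y` in a category with finite limits, the Eilenberg–Moore comparison functor
`K^p : B↓y ⥤ Desc(p)` of the adjunction `p_! ⊣ p^*` is fully faithful iff every counit
component `ε_f : p_!(p^* f) ⟶ f` is a regular epimorphism in the slice category `B↓y`. -/
theorem comparison_fullyFaithful_iff_counit_regularEpi
    {B : Type*} [Category B] [HasFiniteLimits B] {x y : B} (p : x ⟶ y) :
    ((Monad.comparison (Over.mapPullbackAdj p)).Full ∧
      (Monad.comparison (Over.mapPullbackAdj p)).Faithful) ↔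
      ∀ f : Over y, Nonempty (RegularEpi ((Over.mapPullbackAdj p).counit.app f)) :=
  (Over.mapPullbackAdj p).comparison_full_faithful_iff_regularEpi_counit
end

section
/- Let B be a category with chosen pullbacks and p : x ⟶ y a morphism. Suppose that for every algebra (a, γ) for the monad p^* p_! on B↓x (so a : v → x is an object of B↓x and γ : p^*(p_! a) ⟶ a is the algebra structure satisfying the unit and multiplication laws), there exists a morphism f : w ⟶ y in B such that p^* f = a and, regarding γ as a morphism p_!(p^*(p_! a)) ⟶ p_! a in B↓y, one has ε_f ∘ γ = ε_f ∘ ε_{p_! a} (where ε is the counit of p_! ⊣ p^* and p_!(p^* f) = p_! a). Then the Eilenberg–Moore comparison functor K^p : B↓y → Desc(p) is essentially surjective. -/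
open CategoryTheory CategoryTheory.Limits

/-! This works for any adjunction `L ⊣ R`. If an algebra `(A, a)` has `A = R d`, then `a` and
`R ε_d` are maps `R L R d ⟶ R d` with transposes `ε_d ∘ L a` and `ε_d ∘ L R ε_d = ε_d ∘ ε_{L R d}`
(naturality of `ε`). The hypothesis equates these, so `a = R ε_d` and `(A, a)` is the comparison
algebra `K d = (R d, R ε_d)` itself. -/

namespace CategoryTheory.Adjunction

variable {C D : Type*} [Category C] [Category D] {L : C ⥤ D} {R : D ⥤ C} (adj : L ⊣ R)

theorem eq_map_counit_of_counit_comp_eq {d : D} {a : R.obj (L.obj (R.obj d)) ⟶ R.obj d}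
    (h : L.map a ≫ adj.counit.app d =
      adj.counit.app (L.obj (R.obj d)) ≫ adj.counit.app d) :
    a = R.map (adj.counit.app d) := by
  apply (adj.homEquiv _ d).symm.injective
  rw [homEquiv_counit, homEquiv_counit, h]
  exact (adj.counit.naturality (adj.counit.app d)).symm

theorem comparison_essSurj_of_counit_comp_eq
    (H : ∀ A : adj.toMonad.Algebra, ∃ (d : D) (h : R.obj d = A.A),
      L.map A.a ≫ eqToHom (congrArg L.obj h.symm) ≫ adj.counit.app d =
        adj.counit.app (L.obj A.A) ≫ eqToHom (congrArg L.obj h.symm) ≫ adj.counit.app d) :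
    (Monad.comparison adj).EssSurj where
  mem_essImage := by
    rintro ⟨A, a, unit, assoc⟩
    obtain ⟨d, hA, h⟩ := H ⟨A, a, unit, assoc⟩
    dsimp only at hA h
    subst hA
    simp only [eqToHom_refl, Category.id_comp] at h
    obtain rfl := adj.eq_map_counit_of_counit_comp_eq h
    exact ⟨d, ⟨Iso.refl _⟩⟩

end CategoryTheory.Adjunction

/-- Let `B` be a category with pullbacks and `p : x ⟶ y`.  If for every algebra `(a, γ)` for
the monad `p^* p_!` on `B↓x` there is `f : w ⟶ y` with `p^* f = a` and
`ε_f ∘ p_!(γ) = ε_f ∘ ε_{p_! a}`, then the Eilenberg–Moore comparison functor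
`K^p : B↓y ⥤ Desc(p)` is essentially surjective. -/
theorem comparison_essSurj_of_descent_data_effective
    {B : Type*} [Category B] [HasPullbacks B] {x y : B} (p : x ⟶ y)
    (H : ∀ A : (Over.mapPullbackAdj p).toMonad.Algebra,
      ∃ (f : Over y) (h : (Over.pullback p).obj f = A.A),
        (Over.map p).map A.a ≫ eqToHom (congrArg (Over.map p).obj h.symm) ≫
            (Over.mapPullbackAdj p).counit.app f =
          (Over.mapPullbackAdj p).counit.app ((Over.map p).obj A.A) ≫
            eqToHom (congrArg (Over.map p).obj h.symm) ≫
            (Over.mapPullbackAdj p).counit.app f) :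
    (Monad.comparison (Over.mapPullbackAdj p)).EssSurj :=
  (Over.mapPullbackAdj p).comparison_essSurj_of_counit_comp_eq H
end

section
/- Let C and D be categories with pullbacks and U : C ⥤ D a fully faithful functor preserving pullbacks. Suppose that for every object x of C and every effective descent morphism g : U(x) ⟶ z in D, the object z is isomorphic to U(y) for some object y of C. Then U reflects effective descent morphisms: every morphism p in C such that U(p) is an effective descent morphism in D is itself an effective descent morphism in C. -/
/-!
Compare the adjunction `Σ_p ⊣ p^*` in `C` with `Σ_{Up} ⊣ (Up)^*` in `D` through the fully
faithful functors `Over.post U`, which commute with `Σ` and, as `U` preserves pullbacks, with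
pullback. Such a square of adjunctions lifts `Over.post U` to a fully faithful functor between the
Eilenberg–Moore categories that carries the comparison functor of `p` to that of `Up`. Hence the
comparison functor of `p` is fully faithful, and it is essentially surjective once every
`w : Over (U b)` whose pullback along `Up` is isomorphic to some `U x` is itself in the image of
`Over.post U`. The pullback square exhibits `w.left` as the codomain of a pullback of `Up` with
domain `U x`. Effective descent morphisms are stable under pullback, because pulling `g` back
along `f` is, up to the identification of iterated slices, slicing the adjunction `Σ_g ⊣ g^*` at
`f`, and slicing preserves monadicity. So the hypothesis puts `w.left`, hence `w`, in the image.
-/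

open CategoryTheory CategoryTheory.Limits

/-- A morphism `p` in a category with pullbacks is an effective descent morphism if the
Eilenberg–Moore comparison functor of the adjunction `p_! ⊣ p^*` is an equivalence. -/
def IsEffectiveDescentMorphism {B : Type*} [Category B] [HasPullbacks B]
    {x y : B} (p : x ⟶ y) : Prop :=
  (Monad.comparison (Over.mapPullbackAdj p)).IsEquivalence

namespace CategoryTheory

open Category

section SquareOfAdjunctions

variable {A B A' B' : Type*} [Category A] [Category B] [Category A'] [Category B']
  {L : B ⥤ A} {R : A ⥤ B} (adj : L ⊣ R) {L' : B' ⥤ A'} {R' : A' ⥤ B'} (adj' : L' ⊣ R')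
  {V : A ⥤ A'} {W : B ⥤ B'} (α : W ⋙ L' ≅ L ⋙ V) (β : R ⋙ W ≅ V ⋙ R')

def monadSquareIso (X : B) : adj'.toMonad.obj (W.obj X) ≅ W.obj (adj.toMonad.obj X) :=
  R'.mapIso (α.app X) ≪≫ (β.app (L.obj X)).symm

variable {adj adj'}

lemma monadSquareIso_hom_naturality {X Y : B} (f : X ⟶ Y) :
    adj'.toMonad.map (W.map f) ≫ (monadSquareIso adj adj' α β Y).hom =
      (monadSquareIso adj adj' α β X).hom ≫ W.map (adj.toMonad.map f) := by
  have hα : L'.map (W.map f) ≫ α.hom.app Y = α.hom.app X ≫ V.map (L.map f) := α.hom.naturality f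
  have hβ : R'.map (V.map (L.map f)) ≫ β.inv.app (L.obj Y) =
      β.inv.app (L.obj X) ≫ W.map (R.map (L.map f)) := β.inv.naturality (L.map f)
  show R'.map (L'.map (W.map f)) ≫ R'.map (α.hom.app Y) ≫ β.inv.app (L.obj Y) =
    (R'.map (α.hom.app X) ≫ β.inv.app (L.obj X)) ≫ W.map (R.map (L.map f))
  rw [← R'.map_comp_assoc, hα, R'.map_comp_assoc, hβ, assoc]

-- `hu` says that `β` is the mate of `α` (compare `unit_mateEquiv`).
variable (hu : ∀ X : B, W.map (adj.unit.app X) ≫ β.hom.app (L.obj X) =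
    adj'.unit.app (W.obj X) ≫ R'.map (α.hom.app X))
include hu

lemma unit_comp_monadSquareIso_hom (X : B) :
    adj'.toMonad.η.app (W.obj X) ≫ (monadSquareIso adj adj' α β X).hom =
      W.map (adj.toMonad.η.app X) := by
  show adj'.unit.app (W.obj X) ≫ R'.map (α.hom.app X) ≫ β.inv.app (L.obj X) =
    W.map (adj.unit.app X)
  rw [← reassoc_of% (hu X)]
  simp

lemma map_inv_comp_map_counit (a : A) :
    L'.map (β.inv.app a) ≫ α.hom.app (R.obj a) ≫ V.map (adj.counit.app a) =
      adj'.counit.app (V.obj a) := by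
  suffices h : α.hom.app (R.obj a) ≫ V.map (adj.counit.app a) =
      L'.map (β.hom.app a) ≫ adj'.counit.app (V.obj a) by
    rw [h, ← L'.map_comp_assoc, Iso.inv_hom_id_app, L'.map_id, id_comp]
  -- both sides transpose to `β.hom.app a`
  apply (adj'.homEquiv _ _).injective
  simp only [Adjunction.homEquiv_unit, Functor.map_comp]
  have hβ : W.map (R.map (adj.counit.app a)) ≫ β.hom.app a =
      β.hom.app (L.obj (R.obj a)) ≫ R'.map (V.map (adj.counit.app a)) :=
    β.hom.naturality (adj.counit.app a)
  rw [← reassoc_of% (hu (R.obj a)), ← hβ, ← W.map_comp_assoc, Adjunction.right_triangle_components,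
    W.map_id, id_comp, Adjunction.unit_naturality_assoc]
  exact (comp_id _).symm.trans (congrArg _ (adj'.right_triangle_components (V.obj a)).symm)

lemma mu_comp_monadSquareIso_hom (X : B) :
    adj'.toMonad.μ.app (W.obj X) ≫ (monadSquareIso adj adj' α β X).hom =
      adj'.toMonad.map (monadSquareIso adj adj' α β X).hom ≫
        (monadSquareIso adj adj' α β (adj.toMonad.obj X)).hom ≫ W.map (adj.toMonad.μ.app X) := by
  have hβ : R'.map (V.map (adj.counit.app (L.obj X))) ≫ β.inv.app (L.obj X) =
      β.inv.app (L.obj (R.obj (L.obj X))) ≫ W.map (R.map (adj.counit.app (L.obj X))) :=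
    β.inv.naturality (adj.counit.app (L.obj X))
  have hε := congrArg R'.map (map_inv_comp_map_counit α β hu (L.obj X))
  simp only [Functor.map_comp] at hε
  show R'.map (adj'.counit.app (L'.obj (W.obj X))) ≫ R'.map (α.hom.app X) ≫ β.inv.app (L.obj X) =
    R'.map (L'.map (R'.map (α.hom.app X) ≫ β.inv.app (L.obj X))) ≫
      (R'.map (α.hom.app (R.obj (L.obj X))) ≫ β.inv.app (L.obj (R.obj (L.obj X)))) ≫
        W.map (R.map (adj.counit.app (L.obj X)))
  simp only [Functor.map_comp, assoc]
  rw [← hβ, reassoc_of% hε, ← R'.map_comp_assoc, ← R'.map_comp_assoc,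
    Adjunction.counit_naturality]
  rfl

def algebraFunctorOfSquare : adj.toMonad.Algebra ⥤ adj'.toMonad.Algebra where
  obj S :=
    { A := W.obj S.A
      a := (monadSquareIso adj adj' α β S.A).hom ≫ W.map S.a
      unit := by
        rw [reassoc_of% (unit_comp_monadSquareIso_hom α β hu S.A), ← W.map_comp, S.unit, W.map_id]
      assoc := by
        rw [reassoc_of% (mu_comp_monadSquareIso_hom α β hu S.A), Functor.map_comp, assoc,
          reassoc_of% (monadSquareIso_hom_naturality α β S.a), ← W.map_comp, ← W.map_comp, S.assoc] }
  map f :=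
    { f := W.map f.f
      h := by
        dsimp only
        rw [reassoc_of% (monadSquareIso_hom_naturality α β f.f), assoc, ← W.map_comp, ← W.map_comp,
          f.h] }

instance [W.Faithful] : (algebraFunctorOfSquare α β hu).Faithful where
  map_injective h := Monad.Algebra.Hom.ext (W.map_injective (congrArg Monad.Algebra.Hom.f h))

instance [W.Full] [W.Faithful] : (algebraFunctorOfSquare α β hu).Full where
  map_surjective {S S'} m := by
    obtain ⟨g, hg⟩ := W.map_surjective m.f
    have hm : adj'.toMonad.map (W.map g) ≫ (monadSquareIso adj adj' α β S'.A).hom ≫ W.map S'.a =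
        ((monadSquareIso adj adj' α β S.A).hom ≫ W.map S.a) ≫ W.map g := hg ▸ m.h
    rw [reassoc_of% (monadSquareIso_hom_naturality α β g), ← W.map_comp, assoc, ← W.map_comp,
      cancel_epi] at hm
    exact ⟨⟨g, W.map_injective hm⟩, Monad.Algebra.Hom.ext hg⟩

def comparisonSquareIso :
    V ⋙ Monad.comparison adj' ≅ Monad.comparison adj ⋙ algebraFunctorOfSquare α β hu :=
  NatIso.ofComponents (fun a => Monad.Algebra.isoMk (β.app a).symm (by
    have hβ : R'.map (V.map (adj.counit.app a)) ≫ β.inv.app a =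
        β.inv.app (L.obj (R.obj a)) ≫ W.map (R.map (adj.counit.app a)) :=
      β.inv.naturality (adj.counit.app a)
    show R'.map (L'.map (β.inv.app a)) ≫
        (R'.map (α.hom.app (R.obj a)) ≫ β.inv.app (L.obj (R.obj a))) ≫
          W.map (R.map (adj.counit.app a)) =
      R'.map (adj'.counit.app (V.obj a)) ≫ β.inv.app a
    rw [assoc, ← hβ, ← map_inv_comp_map_counit α β hu]
    simp only [Functor.map_comp, assoc])) (fun f => by ext; exact β.inv.naturality f)

theorem isEquivalence_comparison_of_square [V.Full] [V.Faithful] [W.Full] [W.Faithful]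
    [(Monad.comparison adj').IsEquivalence]
    (himg : ∀ a' : A', W.essImage (R'.obj a') → V.essImage a') :
    (Monad.comparison adj).IsEquivalence := by
  let F := algebraFunctorOfSquare α β hu
  let e := comparisonSquareIso α β hu
  have : (Monad.comparison adj ⋙ F).Full := Functor.Full.of_iso e
  have : (Monad.comparison adj ⋙ F).Faithful := Functor.Faithful.of_iso e
  have : (Monad.comparison adj).Faithful := Functor.Faithful.of_comp _ F
  have : (Monad.comparison adj).Full := Functor.Full.of_comp_faithful _ F
  have : (Monad.comparison adj).EssSurj := ⟨fun S => by
    let K' := Monad.comparison adj'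
    let i : K'.obj (K'.objPreimage (F.obj S)) ≅ F.obj S := K'.objObjPreimageIso (F.obj S)
    obtain ⟨a, ⟨j⟩⟩ := himg _ ⟨S.A, ⟨(adj'.toMonad.forget.mapIso i).symm⟩⟩
    exact ⟨a, ⟨F.preimageIso ((e.app a).symm ≪≫ K'.mapIso j ≪≫ i)⟩⟩⟩
  exact { }

end SquareOfAdjunctions

section Slice

variable {A B : Type*} [Category A] [Category B] {L : B ⥤ A} {R : A ⥤ B} (adj : L ⊣ R) (a : A)

def overComparisonAlgebraFunctor :
    Over ((Monad.comparison adj).obj a) ⥤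
      (Over.postAdjunctionRight adj (Y := a)).toMonad.Algebra where
  obj m :=
    { A := Over.mk m.hom.f
      a := Over.homMk m.left.a (by
        show m.left.a ≫ m.hom.f = R.map (L.map m.hom.f ≫ adj.counit.app a)
        rw [← m.hom.h]
        exact (R.map_comp _ _).symm)
      unit := by ext; exact m.left.unit
      assoc := by ext; exact m.left.assoc }
  map n :=
    { f := Over.homMk n.left.f (congrArg Monad.Algebra.Hom.f (Over.w n))
      h := by ext; exact n.left.h }

instance : (overComparisonAlgebraFunctor adj a).Faithful where
  map_injective h := by
    ext
    exact congrArg (fun g => g.f.left) h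

instance : (overComparisonAlgebraFunctor adj a).Full where
  map_surjective g :=
    ⟨Over.homMk ⟨g.f.left, congrArg CommaMorphism.left g.h⟩
      (Monad.Algebra.Hom.ext (Over.w g.f)), rfl⟩

instance : (overComparisonAlgebraFunctor adj a).EssSurj where
  mem_essImage S := by
    let S₀ : adj.toMonad.Algebra :=
      { A := S.A.left
        a := S.a.left
        unit := congrArg CommaMorphism.left S.unit
        assoc := congrArg CommaMorphism.left S.assoc }
    let m : S₀ ⟶ (Monad.comparison adj).obj a :=
      { f := S.A.hom
        h := (R.map_comp _ _).symm.trans (Over.w S.a).symm }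
    exact ⟨Over.mk m, ⟨Iso.refl _⟩⟩

instance : (overComparisonAlgebraFunctor adj a).IsEquivalence where

-- The comparison functor of the sliced adjunction is definitionally
-- `Over.post (Monad.comparison adj) ⋙ overComparisonAlgebraFunctor adj a`.
theorem isEquivalence_comparison_postAdjunctionRight [(Monad.comparison adj).IsEquivalence] :
    (Monad.comparison (Over.postAdjunctionRight adj (Y := a))).IsEquivalence :=
  inferInstanceAs
    (Over.post (Monad.comparison adj) ⋙ overComparisonAlgebraFunctor adj a).IsEquivalence

end Slice

namespace IsPullback

variable {D : Type*} [Category D] [HasPullbacks D] {P X Y Z : D}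
  {fst : P ⟶ X} {snd : P ⟶ Y} {f : X ⟶ Z} {g : Y ⟶ Z} (h : IsPullback fst snd f g)

noncomputable def sliceFunctor : Over P ⥤ Over ((Over.pullback g).obj (Over.mk f)) :=
  Over.map h.isoPullback.hom ⋙ Over.iteratedSliceBackward ((Over.pullback g).obj (Over.mk f))

noncomputable def sliceLeftIso :
    h.sliceFunctor ⋙ Over.post (Over.map g) ⋙
        Over.map ((Over.mapPullbackAdj g).counit.app (Over.mk f)) ≅
      Over.map fst ⋙ Over.iteratedSliceBackward (Over.mk f) :=
  NatIso.ofComponents (fun k => Over.isoMk (Over.isoMk (Iso.refl k.left) (by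
      show 𝟙 k.left ≫ (k.hom ≫ fst) ≫ f = ((k.hom ≫ h.isoPullback.hom) ≫ pullback.snd f g) ≫ g
      simp [h.w])) (by
      ext
      show 𝟙 k.left ≫ k.hom ≫ fst =
        (k.hom ≫ h.isoPullback.hom) ≫ ((Over.mapPullbackAdj g).counit.app (Over.mk f)).left
      simp)) (by
    intro k k' m
    ext
    show m.left ≫ 𝟙 k'.left = 𝟙 k.left ≫ m.left
    simp)

noncomputable def sliceRightIso :
    Over.pullback fst ⋙ h.sliceFunctor ≅
      Over.iteratedSliceBackward (Over.mk f) ⋙ Over.post (Over.pullback g) :=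
  NatIso.ofComponents (fun k =>
    Over.isoMk (Over.isoMk ((of_hasPullback k.hom fst).paste_vert h).isoPullback (by
      show _ ≫ pullback.snd (k.hom ≫ f) g =
        (pullback.snd k.hom fst ≫ h.isoPullback.hom) ≫ pullback.snd f g
      simp)) (by
      ext
      show ((of_hasPullback k.hom fst).paste_vert h).isoPullback.hom ≫
          pullback.lift (pullback.fst (k.hom ≫ f) g ≫ k.hom) (pullback.snd (k.hom ≫ f) g)
            (by simp [pullback.condition]) =
        pullback.snd k.hom fst ≫ h.isoPullback.hom
      ext
      · rw [assoc, pullback.lift_fst, isoPullback_hom_fst_assoc, pullback.condition]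
        simp
      · rw [assoc, pullback.lift_snd, isoPullback_hom_snd]
        simp)) (by
    intro k k' m
    ext
    show pullback.lift (pullback.fst k.hom fst ≫ m.left) (pullback.snd k.hom fst)
          (by simp [pullback.condition]) ≫
        ((of_hasPullback k'.hom fst).paste_vert h).isoPullback.hom =
      ((of_hasPullback k.hom fst).paste_vert h).isoPullback.hom ≫
        pullback.lift (pullback.fst (k.hom ≫ f) g ≫ m.left) (pullback.snd (k.hom ≫ f) g)
          (by simp [pullback.condition])
    apply pullback.hom_ext <;>
      simp only [assoc, pullback.lift_fst, pullback.lift_snd, pullback.lift_snd_assoc,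
        isoPullback_hom_fst, isoPullback_hom_fst_assoc, isoPullback_hom_snd])

lemma sliceFunctor_map_unit_comp_sliceRightIso_hom (k : Over P) :
    h.sliceFunctor.map ((Over.mapPullbackAdj fst).unit.app k) ≫
        h.sliceRightIso.hom.app ((Over.map fst).obj k) =
      (Over.postAdjunctionRight (Over.mapPullbackAdj g)).unit.app (h.sliceFunctor.obj k) ≫
        (Over.post (Over.pullback g)).map (h.sliceLeftIso.hom.app k) := by
  ext
  show pullback.lift (𝟙 k.left) k.hom (by simp) ≫
      ((of_hasPullback (k.hom ≫ fst) fst).paste_vert h).isoPullback.hom =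
    pullback.lift (f := ((k.hom ≫ h.isoPullback.hom) ≫ pullback.snd f g) ≫ g) (g := g)
        (𝟙 k.left) ((k.hom ≫ h.isoPullback.hom) ≫ pullback.snd f g) (by simp) ≫
      pullback.lift (f := (k.hom ≫ fst) ≫ f) (g := g)
        (pullback.fst (((k.hom ≫ h.isoPullback.hom) ≫ pullback.snd f g) ≫ g) g ≫ 𝟙 k.left)
        (pullback.snd _ g) (by rw [← pullback.condition]; simp [h.w])
  apply pullback.hom_ext <;>
    simp only [assoc, pullback.lift_fst, pullback.lift_snd, pullback.lift_snd_assoc,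
      isoPullback_hom_fst, isoPullback_hom_snd, comp_id]

end IsPullback

section PostComposition

variable {C D : Type*} [Category C] [Category D] (U : C ⥤ D) {e b : C} (p : e ⟶ b)

def postCompMapIso : Over.post U ⋙ Over.map (U.map p) ≅ Over.map p ⋙ Over.post U :=
  NatIso.ofComponents (fun k => Over.isoMk (Iso.refl _) (by
    show 𝟙 (U.obj k.left) ≫ U.map (k.hom ≫ p) = U.map k.hom ≫ U.map p
    simp)) (by
    intro k k' m
    ext
    show U.map m.left ≫ 𝟙 _ = 𝟙 _ ≫ U.map m.left
    simp)

variable [HasPullbacks C] [HasPullbacks D] [PreservesLimitsOfShape WalkingCospan U]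

noncomputable def pullbackCompPostIso :
    Over.pullback p ⋙ Over.post U ≅ Over.post U ⋙ Over.pullback (U.map p) :=
  NatIso.ofComponents (fun k => Over.isoMk (PreservesPullback.iso U k.hom p) (by
    show pullbackComparison U k.hom p ≫ pullback.snd (U.map k.hom) (U.map p) =
      U.map (pullback.snd k.hom p)
    exact pullbackComparison_comp_snd _ _ _)) (by
    intro k k' m
    ext
    show U.map (pullback.lift (pullback.fst k.hom p ≫ m.left) (pullback.snd k.hom p)
          (by simp [pullback.condition])) ≫ pullbackComparison U k'.hom p =
      pullbackComparison U k.hom p ≫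
        pullback.lift (pullback.fst (U.map k.hom) (U.map p) ≫ U.map m.left)
          (pullback.snd (U.map k.hom) (U.map p)) (by simp [← U.map_comp, pullback.condition])
    apply pullback.hom_ext <;>
      simp only [assoc, pullbackComparison_comp_fst, pullbackComparison_comp_snd,
        pullbackComparison_comp_fst_assoc, ← U.map_comp, pullback.lift_fst, pullback.lift_snd])

lemma post_map_unit_comp_pullbackCompPostIso_hom (k : Over e) :
    (Over.post U).map ((Over.mapPullbackAdj p).unit.app k) ≫
        (pullbackCompPostIso U p).hom.app ((Over.map p).obj k) =
      (Over.mapPullbackAdj (U.map p)).unit.app ((Over.post U).obj k) ≫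
        (Over.pullback (U.map p)).map ((postCompMapIso U p).hom.app k) := by
  ext
  show U.map (pullback.lift (𝟙 k.left) k.hom (by simp)) ≫ pullbackComparison U (k.hom ≫ p) p =
    pullback.lift (f := U.map k.hom ≫ U.map p) (g := U.map p) (𝟙 _) (U.map k.hom) (by simp) ≫
      pullback.lift (f := U.map (k.hom ≫ p)) (g := U.map p)
        (pullback.fst _ _ ≫ 𝟙 _) (pullback.snd _ _) (by simp [pullback.condition])
  apply pullback.hom_ext <;>
    simp only [assoc, pullbackComparison_comp_fst, pullbackComparison_comp_snd, ← U.map_comp,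
      pullback.lift_fst, pullback.lift_snd, comp_id, U.map_id]

end PostComposition

end CategoryTheory

theorem IsEffectiveDescentMorphism.of_isPullback {D : Type*} [Category D] [HasPullbacks D]
    {P X Y Z : D} {fst : P ⟶ X} {snd : P ⟶ Y} {f : X ⟶ Z} {g : Y ⟶ Z}
    (h : IsPullback fst snd f g) (hg : IsEffectiveDescentMorphism g) :
    IsEffectiveDescentMorphism fst := by
  have : (Monad.comparison (Over.mapPullbackAdj g)).IsEquivalence := hg
  have := isEquivalence_comparison_postAdjunctionRight (Over.mapPullbackAdj g) (Over.mk f)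
  have : (Over.map h.isoPullback.hom).IsEquivalence :=
    (Over.mapIso h.isoPullback).isEquivalence_functor
  have : (Over.iteratedSliceBackward ((Over.pullback g).obj (Over.mk f))).IsEquivalence :=
    (Over.iteratedSliceEquiv _).symm.isEquivalence_functor
  have : (Over.iteratedSliceBackward (Over.mk f)).IsEquivalence :=
    (Over.iteratedSliceEquiv _).symm.isEquivalence_functor
  have : h.sliceFunctor.IsEquivalence := Functor.isEquivalence_trans _ _
  exact isEquivalence_comparison_of_square h.sliceLeftIso h.sliceRightIso
    h.sliceFunctor_map_unit_comp_sliceRightIso_hom fun a' _ => Functor.EssSurj.mem_essImage _ a'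

/-- Let `U : C ⥤ D` be a fully faithful pullback-preserving functor between categories with
pullbacks.  If the codomain of any effective descent morphism out of an object in the image
of `U` is isomorphic to an object in the image of `U`, then `U` reflects effective descent
morphisms. -/
theorem reflects_effective_descent_of_codomains_in_image
    {C D : Type*} [Category C] [Category D] [HasPullbacks C] [HasPullbacks D]
    (U : C ⥤ D) [U.Full] [U.Faithful] [PreservesLimitsOfShape WalkingCospan U]
    (H : ∀ (x : C) (z : D) (g : U.obj x ⟶ z), IsEffectiveDescentMorphism g →
      ∃ y : C, Nonempty (z ≅ U.obj y)) :
    ∀ {e b : C} (p : e ⟶ b), IsEffectiveDescentMorphism (U.map p) →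
      IsEffectiveDescentMorphism p := by
  intro e b p hUp
  have : (Monad.comparison (Over.mapPullbackAdj (U.map p))).IsEquivalence := hUp
  refine isEquivalence_comparison_of_square (postCompMapIso U p) (pullbackCompPostIso U p)
    (post_map_unit_comp_pullbackCompPostIso_hom U p) ?_
  rintro w ⟨k, ⟨φ⟩⟩
  have hφ : φ.hom.left ≫ pullback.snd w.hom (U.map p) = U.map k.hom := Over.w φ.hom
  have hpb : IsPullback (φ.hom.left ≫ pullback.fst w.hom (U.map p)) (U.map k.hom)
      w.hom (U.map p) :=
    IsPullback.of_iso_pullback ⟨by rw [Category.assoc, pullback.condition, reassoc_of% hφ]⟩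
      ((Over.forget _).mapIso φ) rfl hφ
  obtain ⟨y, ⟨ι⟩⟩ := H k.left w.left _ (hUp.of_isPullback hpb)
  exact ⟨Over.mk (U.preimage (ι.inv ≫ w.hom)), ⟨Over.isoMk ι.symm (U.map_preimage _).symm⟩⟩
end
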